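/- Let p be a polynomial of odd degree d with nonnegative coefficients equal to 1 on x+y=1, whose top-degree homogeneous part is x^d + y^d, and let q be defined by p(x,y) - 1 = (x+y-1) q(x,y). If p has no monomials of the form x^j y^{d-1-j}, then (x+y) q_{d-2} = q_{d-1} where q_i denotes the degree-i homogeneous part of q, and consequently x^d + y^d is divisible by (x+y)^2, a contradiction; hence p has at least one monomial of degree d-1. -/
import Mathlib

open MvPolynomial

private lemma fdeg_add {σ : Type*} (a b : σ →₀ ℕ) :
    (a + b).degree = a.degree + b.degree := by
  simp [Finsupp.degree_eq_weight_one, map_add]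

private lemma fdeg_single {σ : Type*} (i : σ) : (Finsupp.single i 1).degree = 1 := by
  simp [Finsupp.degree_eq_weight_one, Finsupp.weight_apply, Finsupp.sum_single_index]

private lemma hcmulX {σ : Type*} [DecidableEq σ] (q : MvPolynomial σ ℝ) (i : σ) (k : ℕ) :
    homogeneousComponent (k + 1) (q * X i) = homogeneousComponent k q * X i := by
  ext m
  rw [coeff_homogeneousComponent, coeff_mul_X', coeff_mul_X', coeff_homogeneousComponent]
  by_cases hi : i ∈ m.support
  · simp only [hi, if_true]
    have hm : (m - Finsupp.single i 1) + Finsupp.single i 1 = m := by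
      ext j
      rcases eq_or_ne j i with rfl | hj
      · have : 1 ≤ m j := Nat.one_le_iff_ne_zero.mpr (Finsupp.mem_support_iff.mp hi)
        simp [Finsupp.single_apply]
        omega
      · simp [Finsupp.single_apply, hj.symm, Ne.symm hj]
    have hdeg : m.degree = (m - Finsupp.single i 1).degree + 1 := by
      conv_lhs => rw [← hm]
      rw [fdeg_add, fdeg_single]
    rw [hdeg]
    by_cases h : (m - Finsupp.single i 1).degree = k <;> simp [h]
  · simp [hi]

private lemma fdeg_fin2 (m : Fin 2 →₀ ℕ) : m.degree = m 0 + m 1 := by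
  have : m.degree = ∑ i : Fin 2, m i := by
    apply Finset.sum_subset (Finset.subset_univ _)
    intro i _ hi
    exact Finsupp.notMem_support_iff.mp hi
  rw [this, Fin.sum_univ_two]

theorem stmt_19 (d : ℕ) (hd : Odd d) (hd1 : 1 < d)
    (p q : MvPolynomial (Fin 2) ℝ)
    (hdeg : p.totalDegree = d)
    (hpos : ∀ m, 0 ≤ p.coeff m)
    (hone : ∀ x y : ℝ, x + y = 1 → MvPolynomial.eval ![x, y] p = 1)
    (htop : MvPolynomial.homogeneousComponent d p = X 0 ^ d + X 1 ^ d)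
    (hq : p - 1 = (X 0 + X 1 - 1) * q) :
    ((∀ m : Fin 2 →₀ ℕ, m 0 + m 1 = d - 1 → p.coeff m = 0) →
      (X 0 + X 1) * MvPolynomial.homogeneousComponent (d - 2) q =
        MvPolynomial.homogeneousComponent (d - 1) q) ∧
    (∃ m : Fin 2 →₀ ℕ, m 0 + m 1 = d - 1 ∧ p.coeff m ≠ 0) := by
  have hrec : ∀ k : ℕ, homogeneousComponent (k + 1) p =
      (X 0 + X 1) * homogeneousComponent k q - homogeneousComponent (k + 1) q := by
    intro k
    have hp : p = q * X 0 + q * X 1 - q + 1 := by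
      have : p = (X 0 + X 1 - 1) * q + 1 := by rw [← hq]; ring
      rw [this]; ring
    rw [hp, map_add, map_sub, map_add, hcmulX, hcmulX]
    have h1 : homogeneousComponent (k + 1) (1 : MvPolynomial (Fin 2) ℝ) = 0 :=
      homogeneousComponent_eq_zero _ _ (by rw [totalDegree_one]; omega)
    rw [h1]
    ring
  have partA : (∀ m : Fin 2 →₀ ℕ, m 0 + m 1 = d - 1 → p.coeff m = 0) →
      (X 0 + X 1) * MvPolynomial.homogeneousComponent (d - 2) q =
        MvPolynomial.homogeneousComponent (d - 1) q := by
    intro h0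
    have hpd1 : homogeneousComponent (d - 1) p = 0 := by
      ext m
      rw [coeff_homogeneousComponent]
      split_ifs with h
      · rw [fdeg_fin2] at h
        simp [h0 m h]
      · simp
    have := hrec (d - 2)
    have hk : d - 2 + 1 = d - 1 := by omega
    rw [hk, hpd1] at this
    exact sub_eq_zero.mp this.symm
  refine ⟨partA, ?_⟩
  by_contra hcon
  push_neg at hcon
  have hA := partA hcon
  set L : MvPolynomial (Fin 2) ℝ := X 0 + X 1 with hL
  have hLne : L ≠ 0 := by
    intro h
    have := congrArg (eval ![(1 : ℝ), 0]) h
    simp [hL] at this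
  have hstep : ∀ j : ℕ, homogeneousComponent (d + j) q =
      L ^ j * homogeneousComponent d q := by
    intro j
    induction j with
    | zero => simp
    | succ n ih =>
      have hk := hrec (d + n)
      have hz : homogeneousComponent (d + n + 1) p = 0 :=
        homogeneousComponent_eq_zero _ _ (by omega)
      rw [hz] at hk
      have h2 : homogeneousComponent (d + n + 1) q = L * homogeneousComponent (d + n) q :=
        (sub_eq_zero.mp hk.symm).symm
      rw [show d + (n + 1) = d + n + 1 from rfl, h2, ih]
      ring
  have hqd : homogeneousComponent d q = 0 := by
    have h0 : homogeneousComponent (d + (q.totalDegree + 1)) q = 0 :=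
      homogeneousComponent_eq_zero _ _ (by omega)
    rw [hstep] at h0
    rcases mul_eq_zero.mp h0 with h | h
    · exact absurd h (pow_ne_zero _ hLne)
    · exact h
  have hd2 : d - 1 + 1 = d := by omega
  have hkey : (X 0 : MvPolynomial (Fin 2) ℝ) ^ d + X 1 ^ d =
      L * (L * homogeneousComponent (d - 2) q) := by
    have h3 := hrec (d - 1)
    rw [hd2, htop, hqd, sub_zero, ← hA] at h3
    exact h3
  have heval := congrArg (aeval ![(Polynomial.X : Polynomial ℝ) + 1, -1]) hkey
  simp only [map_add, map_mul, map_pow, aeval_X, Matrix.cons_val_zero, Matrix.cons_val_one,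
    Matrix.head_cons, hL] at heval
  rw [hd.neg_one_pow] at heval
  set s := aeval ![(Polynomial.X : Polynomial ℝ) + 1, -1] (homogeneousComponent (d - 2) q)
    with hs
  have heval2 : ((Polynomial.X : Polynomial ℝ) + 1) ^ d - 1 = s * Polynomial.X ^ 2 := by
    linear_combination heval
  have hco := congrArg (fun f => Polynomial.coeff f 1) heval2
  simp only [Polynomial.coeff_sub, Polynomial.coeff_X_add_one_pow,
    Polynomial.coeff_mul_X_pow', Polynomial.coeff_one] at hco
  norm_num [Nat.choose_one_right] at hco
  have : d = 0 := Nat.cast_eq_zero.mp hco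
  omega
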